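/- Let G and H be groups and let G' be a subgroup of G of finite index such that there exists an injective group homomorphism from G' into H. If H satisfies the power alternative, then G satisfies the power alternative. -/

import Mathlib

/-- `x` and `y` freely generate a free subgroup of rank 2. -/
def FreelyGenerateF2 {G : Type*} [Group G] (x y : G) : Prop :=
  Function.Injective (FreeGroup.lift (fun i : Fin 2 => if i = 0 then x else y) :
    FreeGroup (Fin 2) →* G)

/-- `G` satisfies the power alternative. -/
def PowerAlternative (G : Type*) [Group G] : Prop :=
  ∀ g h : G, ∃ n : ℕ, 1 ≤ n ∧ (Commute (g ^ n) (h ^ n) ∨ FreelyGenerateF2 (g ^ n) (h ^ n))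

/-! Every element of `G` has a power in a subgroup of finite index `k`, namely its `k!`-th
power; so a pair in `G` can be tested on a pair in the subgroup, which in turn embeds in `H`.
Both commuting and freely generating a free group are reflected by injective homomorphisms. -/

section

open Function

variable {G H : Type*} [Group G] [Group H]

theorem MonoidHom.comp_lift_fin_two (φ : G →* H) (x y : G) :
    φ.comp (FreeGroup.lift fun i : Fin 2 => if i = 0 then x else y) =
      FreeGroup.lift fun i : Fin 2 => if i = 0 then φ x else φ y :=
  FreeGroup.ext_hom _ _ fun i => by simp [apply_ite φ]

theorem FreelyGenerateF2.map {x y : G} (hxy : FreelyGenerateF2 x y) {φ : G →* H}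
    (hφ : Injective φ) : FreelyGenerateF2 (φ x) (φ y) := by
  rw [FreelyGenerateF2, ← φ.comp_lift_fin_two, MonoidHom.coe_comp]
  exact hφ.comp hxy

theorem FreelyGenerateF2.of_map {φ : G →* H} {x y : G}
    (hφxy : FreelyGenerateF2 (φ x) (φ y)) : FreelyGenerateF2 x y := by
  rw [FreelyGenerateF2, ← φ.comp_lift_fin_two, MonoidHom.coe_comp] at hφxy
  exact hφxy.of_comp

theorem PowerAlternative.of_injective {φ : G →* H} (hφ : Injective φ)
    (hH : PowerAlternative H) : PowerAlternative G := by
  intro g h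
  obtain ⟨n, hn, hcomm | hfree⟩ := hH (φ g) (φ h)
  · exact ⟨n, hn, .inl (.of_map hφ (by simpa only [map_pow] using hcomm))⟩
  · exact ⟨n, hn, .inr (.of_map (φ := φ) (by simpa only [map_pow] using hfree))⟩

theorem PowerAlternative.of_forall_pow_mem {K : Subgroup G} (hK : PowerAlternative K) {k : ℕ}
    (hk : k ≠ 0) (hpow : ∀ g : G, g ^ k ∈ K) : PowerAlternative G := by
  intro g h
  obtain ⟨n, hn, hcase⟩ := hK ⟨g ^ k, hpow g⟩ ⟨h ^ k, hpow h⟩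
  refine ⟨k * n, Nat.one_le_iff_ne_zero.2 (mul_ne_zero hk (by omega)), ?_⟩
  simpa only [pow_mul, K.subtype_apply, SubgroupClass.coe_pow] using
    hcase.imp (·.map K.subtype) (·.map K.subtype_injective)

theorem PowerAlternative.of_index_ne_zero {K : Subgroup G} (hK : PowerAlternative K)
    (hindex : K.index ≠ 0) : PowerAlternative G :=
  hK.of_forall_pow_mem (Nat.factorial_ne_zero K.index) fun g =>
    K.pow_mem_of_index_ne_zero_of_dvd hindex g fun _ hm hle => Nat.dvd_factorial hm hle

end

/-- the power alternative passes to finite-index overgroups of subgroups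
of groups satisfying it. -/
theorem power_alternative_of_finite_index_subgroup_embedding
    {G H : Type*} [Group G] [Group H] (G' : Subgroup G)
    (hindex : G'.index ≠ 0)
    (hembed : ∃ f : G' →* H, Function.Injective f)
    (hH : PowerAlternative H) :
    PowerAlternative G := by
  obtain ⟨f, hf⟩ := hembed
  exact (hH.of_injective hf).of_index_ne_zero hindex
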